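/- Let r > 0. The function f₁(s) = 1/( 2−2r+2s + 2·K_{n=1}^∞ (n²r²/(1−r+s)) ), defined for s > |r−1|, is the unique function tending to 0 at +∞ that satisfies f₁(s) + f₁(s+2r) = 1/(s+1) for all s > |r−1|; and the function f₂(s) = 1/( 2r−2+2s + 2·K_{n=1}^∞ (n²r²/(r−1+s)) ) is the unique function tending to 0 at +∞ that satisfies f₂(s) + f₂(s+2r) = 1/(s+2r−1) for all s > |r−1|. -/

import Mathlib

open Filter Real

/-- Numerators of the convergents of a generalized continued fraction with
integer part `b₀`, partial numerators `a n` and partial denominators `b n` (for `n ≥ 1`). -/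
noncomputable def cfNum (b₀ : ℝ) (a b : ℕ → ℝ) : ℕ → ℝ
  | 0 => b₀
  | 1 => b 1 * b₀ + a 1
  | n + 2 => b (n + 2) * cfNum b₀ a b (n + 1) + a (n + 2) * cfNum b₀ a b n

/-- Denominators of the convergents of a generalized continued fraction. -/
noncomputable def cfDen (a b : ℕ → ℝ) : ℕ → ℝ
  | 0 => 1
  | 1 => b 1
  | n + 2 => b (n + 2) * cfDen a b (n + 1) + a (n + 2) * cfDen a b n

/-- `IsCFLimit b₀ a b L` means: the convergents of the generalized continued fraction
`b₀ + a 1 / (b 1 + a 2 / (b 2 + ⋯))` tend to `L`. -/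
def IsCFLimit (b₀ : ℝ) (a b : ℕ → ℝ) (L : ℝ) : Prop :=
  Filter.Tendsto (fun n => cfNum b₀ a b n / cfDen a b n) Filter.atTop (nhds L)

/-!
Let `I_k(t) = laplaceTanhPowSech r t k = ∫₀^∞ e^{-tx} sinh(rx)^k / cosh(rx)^(k+1) dx`. Integration
by parts gives `t I₀ + r I₁ = 1` and `t I_{k+1} + (k+2) r I_{k+2} = (k+1) r I_k`. Hence
`τₙ = (n+1) r I_{n+1} / Iₙ` satisfies `τₙ (t + τ_{n+1}) = (n+1)² r²`: the `τₙ` are the tails of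
the continued fraction `K(t) = K (n² r² / t)`, so `K(t) = τ₀` and `1 / (2t + 2K(t)) = I₀(t) / 2`.
Since `(e^{-tx} + e^{-(t+2r)x}) / cosh(rx) = 2 e^{-(t+r)x}`, we get `I₀(t) + I₀(t+2r) = 2/(t+r)`,
which is the functional equation (with `t = s ± (1 - r)`), and `I₀(t) < 1/t` gives the decay.
The difference of two decaying solutions is `2r`-antiperiodic and tends to `0`, hence vanishes.
-/

open MeasureTheory Set

noncomputable def tanhPowSech (r : ℝ) (k : ℕ) (x : ℝ) : ℝ :=
  sinh (r * x) ^ k / cosh (r * x) ^ (k + 1)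

noncomputable def laplaceTanhPowSech (r t : ℝ) (k : ℕ) : ℝ :=
  ∫ x in Ioi 0, exp (-t * x) * tanhPowSech r k x

section Laplace

variable {r t : ℝ}

lemma tanhPowSech_apply_zero (r : ℝ) (k : ℕ) : tanhPowSech r k 0 = 0 ^ k := by
  simp [tanhPowSech]

lemma abs_tanhPowSech_le_one (r : ℝ) (k : ℕ) (x : ℝ) : |tanhPowSech r k x| ≤ 1 := by
  have hc := cosh_pos (r * x)
  rw [tanhPowSech, abs_div, abs_pow, abs_of_pos (pow_pos hc _), div_le_one (pow_pos hc _)]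
  calc |sinh (r * x)| ^ k ≤ cosh (r * x) ^ k := by
        gcongr
        rw [abs_sinh, ← cosh_abs (r * x)]
        exact (sinh_lt_cosh _).le
    _ ≤ cosh (r * x) ^ (k + 1) := pow_le_pow_right₀ (one_le_cosh _) k.le_succ

lemma tanhPowSech_pos (hr : 0 < r) {x : ℝ} (hx : 0 < x) (k : ℕ) : 0 < tanhPowSech r k x := by
  have := sinh_pos_iff.2 (mul_pos hr hx)
  unfold tanhPowSech
  positivity

lemma continuous_tanhPowSech (r : ℝ) (k : ℕ) : Continuous (tanhPowSech r k) :=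
  .div (by fun_prop) (by fun_prop) fun x => (pow_pos (cosh_pos _) _).ne'

lemma hasDerivAt_tanhPowSech (r : ℝ) (k : ℕ) (x : ℝ) :
    HasDerivAt (tanhPowSech r k)
      (r * (k * tanhPowSech r (k - 1) x - (k + 1) * tanhPowSech r (k + 1) x)) x := by
  have hc := (cosh_pos (r * x)).ne'
  have hsinh : HasDerivAt (fun y => sinh (r * y)) (cosh (r * x) * r) x := by
    simpa using ((hasDerivAt_id x).const_mul r).sinh
  have hcosh : HasDerivAt (fun y => cosh (r * y)) (sinh (r * x) * r) x := by
    simpa using ((hasDerivAt_id x).const_mul r).cosh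
  refine ((hsinh.fun_pow k).fun_div (hcosh.fun_pow (k + 1)) (pow_ne_zero _ hc)).congr_deriv ?_
  rcases k with _ | k
  · simp [tanhPowSech]
    field_simp
  · simp only [tanhPowSech, Nat.add_sub_cancel]
    field_simp
    push_cast
    ring

lemma abs_exp_mul_tanhPowSech_le (r t : ℝ) (k : ℕ) (x : ℝ) :
    |exp (-t * x) * tanhPowSech r k x| ≤ exp (-t * x) := by
  rw [abs_mul, abs_of_pos (exp_pos _)]
  exact mul_le_of_le_one_right (exp_pos _).le (abs_tanhPowSech_le_one r k x)

lemma integrableOn_exp_mul_tanhPowSech (ht : 0 < t) (k : ℕ) :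
    IntegrableOn (fun x => exp (-t * x) * tanhPowSech r k x) (Ioi 0) :=
  (integrableOn_exp_mul_Ioi (neg_neg_of_pos ht) 0).mono'
    ((by fun_prop : Continuous fun x => exp (-t * x)).mul
      (continuous_tanhPowSech r k)).aestronglyMeasurable
    (.of_forall fun x => abs_exp_mul_tanhPowSech_le r t k x)

lemma tendsto_exp_mul_tanhPowSech (ht : 0 < t) (k : ℕ) :
    Tendsto (fun x => exp (-t * x) * tanhPowSech r k x) atTop (nhds 0) :=
  squeeze_zero_norm (abs_exp_mul_tanhPowSech_le r t k)
    (tendsto_exp_atBot.comp (tendsto_id.const_mul_atTop_of_neg (neg_neg_of_pos ht)))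

lemma laplaceTanhPowSech_pos (hr : 0 < r) (ht : 0 < t) (k : ℕ) :
    0 < laplaceTanhPowSech r t k := by
  have hpos : ∀ x ∈ Ioi (0 : ℝ), 0 < exp (-t * x) * tanhPowSech r k x :=
    fun x hx => mul_pos (exp_pos _) (tanhPowSech_pos hr hx k)
  rw [laplaceTanhPowSech, setIntegral_pos_iff_support_of_nonneg_ae
    ((ae_restrict_iff' measurableSet_Ioi).2 (.of_forall fun x hx => (hpos x hx).le))
    (integrableOn_exp_mul_tanhPowSech ht k)]
  refine lt_of_lt_of_le ?_ (measure_mono fun x hx => ⟨(hpos x hx).ne', hx⟩)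
  simp

/-- At `k = 0` the truncated `k - 1` is harmless (its coefficient is `k`); `0 ^ k` is the boundary
term `tanhPowSech r k 0` of the integration by parts. -/
lemma laplaceTanhPowSech_recurrence (ht : 0 < t) (k : ℕ) :
    t * laplaceTanhPowSech r t k + (k + 1) * r * laplaceTanhPowSech r t (k + 1) =
      k * r * laplaceTanhPowSech r t (k - 1) + 0 ^ k := by
  have hint : ∀ j (c : ℝ), IntegrableOn (fun x => c * (exp (-t * x) * tanhPowSech r j x)) (Ioi 0) :=
    fun j c => (integrableOn_exp_mul_tanhPowSech ht j).const_mul c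
  have hderiv : ∀ x ∈ Ici (0 : ℝ), HasDerivAt (fun y => exp (-t * y) * tanhPowSech r k y)
      (-t * (exp (-t * x) * tanhPowSech r k x) + k * r * (exp (-t * x) * tanhPowSech r (k - 1) x)
        - (k + 1) * r * (exp (-t * x) * tanhPowSech r (k + 1) x)) x := by
    intro x _
    refine (((hasDerivAt_id x).const_mul (-t)).exp.mul
      (hasDerivAt_tanhPowSech r k x)).congr_deriv ?_
    simp only [id_eq]
    ring
  have hftc := integral_Ioi_of_hasDerivAt_of_tendsto' hderiv
    (((hint k _).fun_add (hint (k - 1) _)).fun_sub (hint (k + 1) _))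
    (tendsto_exp_mul_tanhPowSech ht k)
  rw [integral_sub ((hint k _).fun_add (hint (k - 1) _)) (hint (k + 1) _),
    integral_add (hint k _) (hint (k - 1) _), integral_const_mul, integral_const_mul,
    integral_const_mul, tanhPowSech_apply_zero, mul_zero, exp_zero, one_mul] at hftc
  simp only [laplaceTanhPowSech]
  linear_combination -hftc

lemma laplaceTanhPowSech_zero_recurrence (ht : 0 < t) :
    t * laplaceTanhPowSech r t 0 + r * laplaceTanhPowSech r t 1 = 1 := by
  simpa using laplaceTanhPowSech_recurrence (r := r) ht 0

lemma laplaceTanhPowSech_zero_add_shift (ht : 0 < t) (htr : 0 < t + 2 * r) :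
    laplaceTanhPowSech r t 0 + laplaceTanhPowSech r (t + 2 * r) 0 = 2 / (t + r) := by
  have hsum : ∀ x, exp (-t * x) * tanhPowSech r 0 x + exp (-(t + 2 * r) * x) * tanhPowSech r 0 x
      = 2 * exp (-(t + r) * x) := by
    intro x
    have hc := (cosh_pos (r * x)).ne'
    simp only [tanhPowSech, pow_zero, zero_add, pow_one, cosh_eq]
    field_simp
    rw [add_mul, ← exp_add, ← exp_add]
    congr 2 <;> ring
  rw [laplaceTanhPowSech, laplaceTanhPowSech, ← integral_add (integrableOn_exp_mul_tanhPowSech ht 0)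
    (integrableOn_exp_mul_tanhPowSech htr 0)]
  simp only [hsum, integral_const_mul]
  rw [integral_exp_mul_Ioi (by linarith) 0]
  field_simp
  simp

lemma laplaceTanhPowSech_zero_lt (hr : 0 < r) (ht : 0 < t) : laplaceTanhPowSech r t 0 < 1 / t := by
  have h := laplaceTanhPowSech_zero_recurrence (r := r) ht
  have h₁ := mul_pos hr (laplaceTanhPowSech_pos hr ht 1)
  rw [lt_div_iff₀ ht]
  linarith

lemma tendsto_laplaceTanhPowSech_zero (hr : 0 < r) :
    Tendsto (fun t => laplaceTanhPowSech r t 0) atTop (nhds 0) := by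
  refine tendsto_of_tendsto_of_tendsto_of_le_of_le' tendsto_const_nhds
    tendsto_inv_atTop_zero ?_ ?_
  · filter_upwards [eventually_gt_atTop 0] with t ht
    exact (laplaceTanhPowSech_pos hr ht 0).le
  · filter_upwards [eventually_gt_atTop 0] with t ht
    simpa using (laplaceTanhPowSech_zero_lt hr ht).le

end Laplace

section ContinuedFraction

variable {b₀ : ℝ} {a b τ : ℕ → ℝ}

lemma cfDen_pos (ha : ∀ n, 0 ≤ a n) (hb : ∀ n, 0 < b (n + 1)) (n : ℕ) : 0 < cfDen a b n := by
  suffices h : 0 < cfDen a b n ∧ 0 < cfDen a b (n + 1) from h.1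
  induction n with
  | zero => exact ⟨by simp [cfDen], by simpa [cfDen] using hb 0⟩
  | succ n ih =>
    refine ⟨ih.2, ?_⟩
    rw [cfDen.eq_3]
    exact add_pos_of_pos_of_nonneg (mul_pos (hb _) ih.2) (mul_nonneg (ha _) ih.1.le)

lemma cfNum_add_mul_tail (hτ : ∀ n, τ n * (b (n + 1) + τ (n + 1)) = a (n + 1)) (n : ℕ) :
    cfNum b₀ a b (n + 1) + τ (n + 1) * cfNum b₀ a b n =
      (b₀ + τ 0) * (cfDen a b (n + 1) + τ (n + 1) * cfDen a b n) := by
  induction n with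
  | zero =>
    simp only [zero_add, cfNum.eq_1, cfNum.eq_2, cfDen.eq_1, cfDen.eq_2]
    linear_combination -hτ 0
  | succ n ih =>
    rw [cfNum.eq_3, cfDen.eq_3]
    linear_combination (b (n + 2) + τ (n + 2)) * ih
      + ((b₀ + τ 0) * cfDen a b n - cfNum b₀ a b n) * hτ (n + 1)

lemma abs_mediant_sub_le {p₀ p₁ q₀ q₁ w : ℝ} (hq₀ : 0 < q₀) (hq₁ : 0 < q₁) (hw : 0 ≤ w) :
    |(p₁ + w * p₀) / (q₁ + w * q₀) - p₁ / q₁| ≤ |p₀ / q₀ - p₁ / q₁| := by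
  have hq : 0 < q₁ + w * q₀ := by positivity
  have hsplit : (p₁ + w * p₀) / (q₁ + w * q₀) - p₁ / q₁ =
      w * q₀ / (q₁ + w * q₀) * (p₀ / q₀ - p₁ / q₁) := by
    field_simp
    ring
  rw [hsplit, abs_mul]
  refine mul_le_of_le_one_left (abs_nonneg _) ?_
  rw [abs_of_nonneg (by positivity), div_le_one hq]
  linarith

/-- `τ n` plays the role of the tail `a (n+1) / (b (n+1) + a (n+2) / (b (n+2) + ⋯))`; the candidate
limit `b₀ + τ 0` is then a weighted mediant of any two consecutive convergents. -/
theorem IsCFLimit.eq_add_tail {K : ℝ} (ha : ∀ n, 0 ≤ a n) (hb : ∀ n, 0 < b (n + 1))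
    (hτ₀ : ∀ n, 0 ≤ τ n) (hτ : ∀ n, τ n * (b (n + 1) + τ (n + 1)) = a (n + 1))
    (hK : IsCFLimit b₀ a b K) : K = b₀ + τ 0 := by
  set c : ℕ → ℝ := fun n => cfNum b₀ a b n / cfDen a b n
  have hq := cfDen_pos ha hb
  have hc₁ : Tendsto (fun n => c (n + 1)) atTop (nhds K) := hK.comp (tendsto_add_atTop_nat 1)
  have hgap : Tendsto (fun n => |c n - c (n + 1)|) atTop (nhds 0) := by
    simpa using (hK.sub hc₁).abs
  have hclose : ∀ n, |(b₀ + τ 0) - c (n + 1)| ≤ |c n - c (n + 1)| := by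
    intro n
    have hden : 0 < cfDen a b (n + 1) + τ (n + 1) * cfDen a b n :=
      add_pos_of_pos_of_nonneg (hq _) (mul_nonneg (hτ₀ _) (hq n).le)
    rw [eq_div_of_mul_eq hden.ne' (cfNum_add_mul_tail hτ n).symm]
    exact abs_mediant_sub_le (hq n) (hq (n + 1)) (hτ₀ _)
  have hc₁' : Tendsto (fun n => c (n + 1)) atTop (nhds (b₀ + τ 0)) := by
    rw [tendsto_iff_norm_sub_tendsto_zero]
    refine squeeze_zero (fun n => norm_nonneg _) (fun n => ?_) hgap
    rw [Real.norm_eq_abs, abs_sub_comm]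
    exact hclose n
  exact tendsto_nhds_unique hc₁ hc₁'

end ContinuedFraction

theorem IsCFLimit.add_eq_inv_laplaceTanhPowSech {r t K : ℝ} (hr : 0 < r) (ht : 0 < t)
    (hK : IsCFLimit 0 (fun n => (n : ℝ) ^ 2 * r ^ 2) (fun _ => t) K) :
    t + K = (laplaceTanhPowSech r t 0)⁻¹ := by
  have hL := laplaceTanhPowSech_pos hr ht
  have h0 := laplaceTanhPowSech_zero_recurrence (r := r) ht
  set L := laplaceTanhPowSech r t
  set τ : ℕ → ℝ := fun n => (n + 1) * r * L (n + 1) / L n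
  have htail : ∀ n, τ n * (t + τ (n + 1)) = ((n + 1 : ℕ) : ℝ) ^ 2 * r ^ 2 := by
    intro n
    have h := laplaceTanhPowSech_recurrence (r := r) ht (n + 1)
    rw [zero_pow n.succ_ne_zero, add_zero, Nat.add_sub_cancel] at h
    have := (hL n).ne'
    have := (hL (n + 1)).ne'
    simp only [τ]
    field_simp
    push_cast at h ⊢
    linear_combination ((n : ℝ) + 1) * h
  have hK : K = r * L 1 / L 0 := by
    simpa [τ] using hK.eq_add_tail (fun n => by positivity) (fun _ => ht)
      (fun n => (div_pos (mul_pos (by positivity) (hL _)) (hL n)).le) htail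
  have := (hL 0).ne'
  rw [hK]
  field_simp
  linear_combination h0

lemma eq_of_add_shift_eq_of_tendsto_zero {a p : ℝ} (hp : 0 < p) {f g h : ℝ → ℝ}
    (hf : ∀ s, a < s → f s + f (s + p) = h s) (hg : ∀ s, a < s → g s + g (s + p) = h s)
    (hf₀ : Tendsto f atTop (nhds 0)) (hg₀ : Tendsto g atTop (nhds 0)) {s : ℝ} (hs : a < s) :
    f s = g s := by
  have hshift : ∀ n : ℕ, |f (s + n * p) - g (s + n * p)| = |f s - g s| := by
    intro n
    induction n with
    | zero => simp
    | succ n ih =>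
      have hsn : a < s + n * p := by nlinarith [n.cast_nonneg (α := ℝ)]
      have := hf _ hsn
      have := hg _ hsn
      rw [Nat.cast_succ, add_one_mul, ← add_assoc, ← ih, ← abs_neg]
      congr 1
      linarith
  have hlim : Tendsto (fun n : ℕ => |f (s + n * p) - g (s + n * p)|) atTop (nhds 0) := by
    simpa using ((hf₀.sub hg₀).comp (tendsto_atTop_add_const_left _ s
      (tendsto_natCast_atTop_atTop.atTop_mul_const hp))).abs
  simp only [hshift] at hlim
  exact sub_eq_zero.1 (abs_eq_zero.1 (tendsto_nhds_unique tendsto_const_nhds hlim))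

theorem unique_decaying_solution_of_isCFLimit {r a c : ℝ} (hr : 0 < r) (hca : 0 ≤ c + a) {K : ℝ → ℝ}
    (hK : ∀ s, a < s → IsCFLimit 0 (fun n => (n : ℝ) ^ 2 * r ^ 2) (fun _ => c + s) (K s))
    {F h : ℝ → ℝ} (hF : ∀ s, F s = 1 / (2 * (c + s) + 2 * K s))
    (hh : ∀ s, h s = 1 / (c + s + r)) :
    (∀ s, a < s → F s + F (s + 2 * r) = h s) ∧ Tendsto F atTop (nhds 0) ∧
      ∀ f : ℝ → ℝ, (∀ s, a < s → f s + f (s + 2 * r) = h s) → Tendsto f atTop (nhds 0) →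
        ∀ s, a < s → f s = F s := by
  have hF_laplace : ∀ s, a < s → F s = laplaceTanhPowSech r (c + s) 0 / 2 := by
    intro s hs
    rw [hF, ← mul_add, (hK s hs).add_eq_inv_laplaceTanhPowSech hr (by linarith)]
    field_simp
  have hsol : ∀ s, a < s → F s + F (s + 2 * r) = h s := by
    intro s hs
    rw [hF_laplace s hs, hF_laplace _ (by linarith), hh, ← add_assoc]
    linear_combination laplaceTanhPowSech_zero_add_shift (r := r) (t := c + s) (by linarith)
      (by linarith) / 2
  have hdecay : Tendsto F atTop (nhds 0) := by
    refine Tendsto.congr' ?_ (by simpa using ((tendsto_laplaceTanhPowSech_zero hr).comp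
      (tendsto_atTop_add_const_left _ c tendsto_id)).div_const 2)
    filter_upwards [eventually_gt_atTop a] with s hs
    exact (hF_laplace s hs).symm
  exact ⟨hsol, hdecay, fun f hf hf₀ s hs =>
    eq_of_add_shift_eq_of_tendsto_zero (by positivity) hf hsol hf₀ hdecay hs⟩

theorem cf_functional_equations_f1_f2 (r : ℝ) (hr : 0 < r) (K₁ K₂ : ℝ → ℝ)
    (hK₁ : ∀ s : ℝ, |r - 1| < s →
      IsCFLimit 0 (fun n => (n : ℝ) ^ 2 * r ^ 2) (fun _ => 1 - r + s) (K₁ s))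
    (hK₂ : ∀ s : ℝ, |r - 1| < s →
      IsCFLimit 0 (fun n => (n : ℝ) ^ 2 * r ^ 2) (fun _ => r - 1 + s) (K₂ s)) :
    ((∀ s : ℝ, |r - 1| < s →
        1 / (2 - 2*r + 2*s + 2 * K₁ s) +
          1 / (2 - 2*r + 2*(s + 2*r) + 2 * K₁ (s + 2*r)) = 1 / (s + 1)) ∧
      Tendsto (fun s : ℝ => 1 / (2 - 2*r + 2*s + 2 * K₁ s)) atTop (nhds 0) ∧
      ∀ f : ℝ → ℝ, (∀ s : ℝ, |r - 1| < s → f s + f (s + 2*r) = 1 / (s + 1)) →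
        Tendsto f atTop (nhds 0) →
        ∀ s : ℝ, |r - 1| < s → f s = 1 / (2 - 2*r + 2*s + 2 * K₁ s)) ∧
    ((∀ s : ℝ, |r - 1| < s →
        1 / (2*r - 2 + 2*s + 2 * K₂ s) +
          1 / (2*r - 2 + 2*(s + 2*r) + 2 * K₂ (s + 2*r)) = 1 / (s + 2*r - 1)) ∧
      Tendsto (fun s : ℝ => 1 / (2*r - 2 + 2*s + 2 * K₂ s)) atTop (nhds 0) ∧
      ∀ f : ℝ → ℝ, (∀ s : ℝ, |r - 1| < s → f s + f (s + 2*r) = 1 / (s + 2*r - 1)) →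
        Tendsto f atTop (nhds 0) →
        ∀ s : ℝ, |r - 1| < s → f s = 1 / (2*r - 2 + 2*s + 2 * K₂ s)) := by
  have h₁ : 0 ≤ 1 - r + |r - 1| := by linarith [le_abs_self (r - 1)]
  have h₂ : 0 ≤ r - 1 + |r - 1| := by linarith [neg_abs_le (r - 1)]
  exact ⟨unique_decaying_solution_of_isCFLimit hr h₁ hK₁ (fun s => by ring) (fun s => by ring),
    unique_decaying_solution_of_isCFLimit hr h₂ hK₂ (fun s => by ring) (fun s => by ring)⟩
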